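/- Every point of the UL-flexibility set F(u,l) is a convex combination of permutations of the T+1 vertex vectors p^(0), ..., p^(T): F(u,l) equals the convex hull of {Π·p^(k) : Π a T×T permutation matrix, k ∈ {0,...,T}}, where p^(k)_t = (u_t − u_{t−1})/Δt for t ≤ k and (l_{T−t+1} − l_{T−t})/Δt otherwise. -/

import Mathlib

open Finset

noncomputable section

/-- The UL-flexibility set: all signals `p` such that for every nonempty
subset `S` of time indices with `|S| = k`, `l k ≤ Δt * ∑_{t∈S} p t ≤ u k`. -/
def ULset (T : ℕ) (Δt : ℝ) (u l : ℕ → ℝ) : Set (Fin T → ℝ) :=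
  {p | ∀ S : Finset (Fin T), S.Nonempty →
    l S.card ≤ Δt * ∑ t ∈ S, p t ∧ Δt * ∑ t ∈ S, p t ≤ u S.card}

/-- Zero extension of a parameter vector: value 0 at index 0. -/
def ZExt (v : ℕ → ℝ) : ℕ → ℝ := fun k => if k = 0 then 0 else v k

/-- Valid UL parameters: the zero-extension of `u` is concave, nonnegative and
increasing; the zero-extension of `l` is convex, nonnegative and increasing; and
the zero-extension of `u` plus the reversed zero-extension of `l` is increasing. -/
def ValidUL (T : ℕ) (u l : ℕ → ℝ) : Prop :=
  (∀ j, 1 ≤ j → j + 1 ≤ T → ZExt u (j - 1) + ZExt u (j + 1) ≤ 2 * ZExt u j) ∧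
  (∀ k, k ≤ T → 0 ≤ ZExt u k) ∧
  (∀ j, j + 1 ≤ T → ZExt u j ≤ ZExt u (j + 1)) ∧
  (∀ j, 1 ≤ j → j + 1 ≤ T → 2 * ZExt l j ≤ ZExt l (j - 1) + ZExt l (j + 1)) ∧
  (∀ k, k ≤ T → 0 ≤ ZExt l k) ∧
  (∀ j, j + 1 ≤ T → ZExt l j ≤ ZExt l (j + 1)) ∧
  (∀ j, 1 ≤ j → j ≤ T →
    ZExt l (T - j + 1) - ZExt l (T - j) ≤ ZExt u j - ZExt u (j - 1))

/-- Vertex candidate `p^(k)` (0-based time index `t` corresponds to paper index `t+1`). -/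
def ULvertex (T : ℕ) (Δt : ℝ) (u l : ℕ → ℝ) (k : ℕ) : Fin T → ℝ :=
  fun t => if (t : ℕ) < k then (ZExt u ((t : ℕ) + 1) - ZExt u (t : ℕ)) / Δt
           else (ZExt l (T - (t : ℕ)) - ZExt l (T - (t : ℕ) - 1)) / Δt

/-!
For `p ∈ F(u,l)` with `s = Δt • ∑ p`, every sum of `Δt • p` over `i` slots is at most
`min u_i (s - l_{T-i})` (apply the lower bound to the complement). The vertex `p^(k)` is
decreasing (concavity of `u`, convexity of `l`, the cross condition), so its extreme sums over `i`
slots are a prefix and a complement of a prefix, which the telescoped cross condition keeps within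
`[l_i, u_i]`; hence the hull lies in `F(u,l)`, both sides being invariant under permutations.
Conversely, by separation it suffices to dominate every linear functional `∑ c_t p_t` on `F(u,l)`
by its value at a point of the hull. Sort `c` decreasingly; by Abel summation it is enough to find
a point of the hull with the same total as `p` and larger prefix sums. Choose `j` with `s` between
the totals of `p^(j)` and `p^(j+1)`: the point of total `s` on the segment between them has its
prefix sum of length `i` equal to `u_i` for `i ≤ j` and to `s - l_{T-i}` for `i > j`.
-/

variable {T i k : ℕ} {Δt : ℝ} {u l : ℕ → ℝ}

def prefixSet (T i : ℕ) : Finset (Fin T) := {t | (t : ℕ) < i}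

lemma mem_prefixSet {t : Fin T} : t ∈ prefixSet T i ↔ (t : ℕ) < i := by simp [prefixSet]

lemma card_prefixSet (hi : i ≤ T) : #(prefixSet T i) = i := by
  rw [show prefixSet T i = (range i).attachFin (fun _ h => (mem_range.1 h).trans_le hi) by
    ext t; simp [mem_prefixSet], card_attachFin, card_range]

lemma prefixSet_zero : prefixSet T 0 = ∅ := by ext t; simp [mem_prefixSet]

lemma prefixSet_self : prefixSet T T = univ := by ext t; simp [mem_prefixSet]

lemma sum_prefixSet_succ {M : Type*} [AddCommMonoid M] (x : Fin T → M) (hi : i < T) :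
    ∑ t ∈ prefixSet T (i + 1), x t = ∑ t ∈ prefixSet T i, x t + x ⟨i, hi⟩ := by
  have : prefixSet T (i + 1) = insert ⟨i, hi⟩ (prefixSet T i) := by
    ext t
    simp only [mem_prefixSet, mem_insert, Fin.ext_iff]
    omega
  rw [this, sum_insert (by simp [mem_prefixSet]), add_comm]

section OrderedSums

variable {M : Type*} [AddCommMonoid M] [LinearOrder M] [IsOrderedAddMonoid M]

lemma sum_le_sum_of_card_eq_of_forall_le {ι : Type*} {f : ι → M} {A B : Finset ι}
    (hcard : #A = #B) (h : ∀ a ∈ A, ∀ b ∈ B, f a ≤ f b) : ∑ a ∈ A, f a ≤ ∑ b ∈ B, f b := by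
  obtain rfl | hA := A.eq_empty_or_nonempty
  · rw [card_empty, eq_comm, card_eq_zero] at hcard
    simp [hcard]
  obtain ⟨a, ha, hmax⟩ := A.exists_max_image f hA
  calc ∑ a ∈ A, f a ≤ #A • f a := sum_le_card_nsmul _ _ _ hmax
    _ = #B • f a := by rw [hcard]
    _ ≤ ∑ b ∈ B, f b := card_nsmul_le_sum _ _ _ (h a ha)

lemma Antitone.sum_le_sum_prefixSet {x : Fin T → M} (hx : Antitone x) (S : Finset (Fin T)) :
    ∑ t ∈ S, x t ≤ ∑ t ∈ prefixSet T #S, x t := by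
  have hcard : #(S \ prefixSet T #S) = #(prefixSet T #S \ S) :=
    card_sdiff_comm (card_prefixSet (by simpa using card_le_univ S)).symm
  have hexch := sum_le_sum_of_card_eq_of_forall_le (f := x) hcard fun a ha b hb =>
    hx (Fin.le_def.2 (by simp only [mem_sdiff, mem_prefixSet] at ha hb; omega))
  rw [← sum_inter_add_sum_sdiff S (prefixSet T #S), ← sum_inter_add_sum_sdiff (prefixSet T #S) S,
    inter_comm]
  exact add_le_add_right hexch _

end OrderedSums

-- Abel summation.
lemma Antitone.sum_mul_le_sum_mul {R : Type*} [CommRing R] [LinearOrder R] [IsStrictOrderedRing R]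
    {c x y : Fin T → R} (hc : Antitone c)
    (hpref : ∀ i ≤ T, ∑ t ∈ prefixSet T i, x t ≤ ∑ t ∈ prefixSet T i, y t)
    (htot : ∑ t, x t = ∑ t, y t) : ∑ t, c t * x t ≤ ∑ t, c t * y t := by
  have key : ∀ m (hm : m < T), c ⟨m, hm⟩ * ∑ t ∈ prefixSet T (m + 1), (y t - x t) ≤
      ∑ t ∈ prefixSet T (m + 1), c t * (y t - x t) := by
    intro m hm
    induction m with
    | zero => simp [sum_prefixSet_succ _ hm, prefixSet_zero]
    | succ m ih =>
      have hD : 0 ≤ ∑ t ∈ prefixSet T (m + 1), (y t - x t) := by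
        simpa [sum_sub_distrib] using hpref (m + 1) hm.le
      have hcm : c ⟨m + 1, hm⟩ ≤ c ⟨m, by omega⟩ := hc (Fin.le_def.2 (Nat.le_succ m))
      rw [sum_prefixSet_succ _ hm, sum_prefixSet_succ (fun t => c t * (y t - x t)) hm]
      linarith [ih (by omega), mul_le_mul_of_nonneg_right hcm hD]
  suffices 0 ≤ ∑ t, c t * (y t - x t) by
    simpa [mul_sub, sum_sub_distrib] using this
  obtain _ | n := T
  · simp
  · simpa [prefixSet_self, sum_sub_distrib, htot] using key n (Nat.lt_succ_self n)

lemma ZExt_zero (v : ℕ → ℝ) : ZExt v 0 = 0 := rfl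

lemma mem_ULset_iff {p : Fin T → ℝ} : p ∈ ULset T Δt u l ↔
    ∀ S : Finset (Fin T), ZExt l #S ≤ Δt * ∑ t ∈ S, p t ∧ Δt * ∑ t ∈ S, p t ≤ ZExt u #S := by
  refine ⟨fun hp S => ?_, fun hp S hS => ?_⟩
  · obtain rfl | hS := S.eq_empty_or_nonempty
    · simp [ZExt]
    · simpa [ZExt, hS.ne_empty] using hp S hS
  · simpa [ZExt, hS.ne_empty] using hp S

lemma mul_sum_le_of_mem_ULset {p : Fin T → ℝ} (hp : p ∈ ULset T Δt u l) (S : Finset (Fin T)) :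
    Δt * ∑ t ∈ S, p t ≤ min (ZExt u #S) (Δt * ∑ t, p t - ZExt l (T - #S)) := by
  have hS := (mem_ULset_iff.1 hp S).2
  have hSc := (mem_ULset_iff.1 hp Sᶜ).1
  rw [card_compl, Fintype.card_fin] at hSc
  rw [← sum_add_sum_compl S p]
  exact le_min hS (by linarith)

lemma comp_perm_mem_ULset {p : Fin T → ℝ} (hp : p ∈ ULset T Δt u l) (σ : Equiv.Perm (Fin T)) :
    p ∘ σ ∈ ULset T Δt u l := by
  intro S hS
  have h := hp (S.image σ) (hS.image σ)
  rwa [card_image_of_injective S σ.injective, sum_image (by simp)] at h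

lemma mul_sum_smul_add_smul (S : Finset (Fin T)) (x y : Fin T → ℝ) (α β : ℝ) :
    Δt * ∑ t ∈ S, (α • x + β • y) t = α * (Δt * ∑ t ∈ S, x t) + β * (Δt * ∑ t ∈ S, y t) := by
  simp only [Pi.add_apply, Pi.smul_apply, smul_eq_mul, sum_add_distrib, ← mul_sum]
  ring

lemma convex_ULset : Convex ℝ (ULset T Δt u l) := by
  intro x hx y hy a b ha hb hab S hS
  obtain ⟨hx₁, hx₂⟩ := hx S hS
  obtain ⟨hy₁, hy₂⟩ := hy S hS
  have hl : l #S = a * l #S + b * l #S := by rw [← add_mul, hab, one_mul]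
  have hu : u #S = a * u #S + b * u #S := by rw [← add_mul, hab, one_mul]
  rw [mul_sum_smul_add_smul]
  constructor <;> nlinarith [mul_le_mul_of_nonneg_left hx₁ ha, mul_le_mul_of_nonneg_left hy₁ hb,
    mul_le_mul_of_nonneg_left hx₂ ha, mul_le_mul_of_nonneg_left hy₂ hb]

section ValidUL

variable (hv : ValidUL T u l)
include hv

lemma ValidUL.u_sub_le {a b c : ℕ} (hb : b = a + 1) (hc : c = b + 1) (hcT : c ≤ T) :
    ZExt u c - ZExt u b ≤ ZExt u b - ZExt u a := by
  have := hv.1 b (by omega) (by omega)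
  rw [show b - 1 = a by omega, ← hc] at this
  linarith

lemma ValidUL.l_sub_le {a b c : ℕ} (hb : b = a + 1) (hc : c = b + 1) (hcT : c ≤ T) :
    ZExt l b - ZExt l a ≤ ZExt l c - ZExt l b := by
  have := hv.2.2.2.1 b (by omega) (by omega)
  rw [show b - 1 = a by omega, ← hc] at this
  linarith

lemma ValidUL.l_sub_le_u_sub {j : ℕ} (hj : j < T) :
    ZExt l (T - j) - ZExt l (T - j - 1) ≤ ZExt u (j + 1) - ZExt u j := by
  have := hv.2.2.2.2.2.2 (j + 1) (by omega) hj
  rwa [show T - (j + 1) + 1 = T - j by omega, Nat.add_sub_cancel, ← Nat.sub_sub] at this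

lemma ValidUL.l_sub_le_u_sub_of_le {a b : ℕ} (hab : a ≤ b) (hbT : b ≤ T) :
    ZExt l (T - a) - ZExt l (T - b) ≤ ZExt u b - ZExt u a := by
  induction b, hab using Nat.le_induction with
  | base => simp
  | succ b hab ih =>
    have := hv.l_sub_le_u_sub (j := b) (by omega)
    rw [Nat.sub_sub] at this
    linarith [ih (by omega)]

end ValidUL

lemma sum_prefixSet_ULvertex (hΔt : Δt ≠ 0) (k : ℕ) (hi : i ≤ T) :
    Δt * ∑ t ∈ prefixSet T i, ULvertex T Δt u l k t =
      ZExt u (min i k) + ZExt l (T - min i k) - ZExt l (T - i) := by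
  induction i with
  | zero => simp [prefixSet_zero, ZExt]
  | succ i ih =>
    rw [sum_prefixSet_succ _ hi, mul_add, ih (by omega)]
    simp only [ULvertex]
    split_ifs with hik
    · rw [min_eq_left hik.le, min_eq_left hik]
      field_simp
      ring
    · rw [min_eq_right (by omega), min_eq_right (by omega), ← Nat.sub_sub]
      field_simp
      ring

lemma sum_ULvertex (hΔt : Δt ≠ 0) (hk : k ≤ T) :
    Δt * ∑ t, ULvertex T Δt u l k t = ZExt u k + ZExt l (T - k) := by
  have := sum_prefixSet_ULvertex (u := u) (l := l) hΔt k (le_refl T)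
  rwa [prefixSet_self, min_eq_right hk, Nat.sub_self, ZExt_zero, sub_zero] at this

lemma ULvertex_antitone (hv : ValidUL T u l) (hΔt : 0 < Δt) (k : ℕ) :
    Antitone (ULvertex T Δt u l k) := by
  set g : ℕ → ℝ := fun n => if n < k then (ZExt u (n + 1) - ZExt u n) / Δt
    else (ZExt l (T - n) - ZExt l (T - n - 1)) / Δt
  have hg : AntitoneOn g (Set.Iio T) := by
    refine antitoneOn_of_add_one_le Set.ordConnected_Iio fun n _ _ hn => ?_
    rw [Set.mem_Iio] at hn
    simp only [g]
    split_ifs with h₁ h₂ h₂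
    · exact div_le_div_of_nonneg_right (hv.u_sub_le rfl rfl (by omega)) hΔt.le
    · omega
    · refine div_le_div_of_nonneg_right ?_ hΔt.le
      rw [← Nat.sub_sub]
      linarith [hv.l_sub_le (a := T - n - 1 - 1) (b := T - n - 1) (c := T - n)
        (by omega) (by omega) (by omega), hv.l_sub_le_u_sub (j := n) (by omega)]
    · refine div_le_div_of_nonneg_right ?_ hΔt.le
      rw [← Nat.sub_sub]
      exact hv.l_sub_le (by omega) (by omega) (by omega)
  exact fun a b hab => hg a.2 b.2 hab

lemma ULvertex_mem_ULset (hv : ValidUL T u l) (hΔt : 0 < Δt) (hk : k ≤ T) :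
    ULvertex T Δt u l k ∈ ULset T Δt u l := by
  refine mem_ULset_iff.2 fun S => ⟨?_, ?_⟩
  · have hS : #S ≤ T := by simpa using card_le_univ S
    have hSc := mul_le_mul_of_nonneg_left
      ((ULvertex_antitone hv hΔt k).sum_le_sum_prefixSet Sᶜ) hΔt.le
    rw [card_compl, Fintype.card_fin,
      sum_prefixSet_ULvertex hΔt.ne' k (Nat.sub_le T #S), Nat.sub_sub_self hS] at hSc
    have htot := sum_ULvertex (u := u) (l := l) hΔt.ne' hk
    rw [← sum_add_sum_compl S, mul_add] at htot
    linarith [hv.l_sub_le_u_sub_of_le (min_le_right (T - #S) k) hk]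
  · have hS : #S ≤ T := by simpa using card_le_univ S
    have hSp := mul_le_mul_of_nonneg_left
      ((ULvertex_antitone hv hΔt k).sum_le_sum_prefixSet S) hΔt.le
    rw [sum_prefixSet_ULvertex hΔt.ne' k hS] at hSp
    linarith [hv.l_sub_le_u_sub_of_le (min_le_left #S k) hS]

lemma exists_adjacent_le_le (g : ℕ → ℝ) {s : ℝ} (h0 : g 0 ≤ s) :
    ∀ n, s ≤ g n → ∃ j j', j ≤ j' ∧ j' ≤ j + 1 ∧ j' ≤ n ∧ g j ≤ s ∧ s ≤ g j'
  | 0, hs => ⟨0, 0, le_rfl, zero_le_one, le_rfl, h0, hs⟩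
  | n + 1, hs => by
    by_cases hn : s ≤ g n
    · obtain ⟨j, j', h₁, h₂, h₃, h₄, h₅⟩ := exists_adjacent_le_le g h0 n hn
      exact ⟨j, j', h₁, h₂, h₃.trans n.le_succ, h₄, h₅⟩
    · exact ⟨n, n + 1, n.le_succ, le_rfl, le_rfl, le_of_not_ge hn, hs⟩

lemma exists_mem_segment_ULvertex_sum_prefixSet_le (hΔt : 0 < Δt) {p : Fin T → ℝ}
    (hp : p ∈ ULset T Δt u l) :
    ∃ j ≤ T, ∃ j' ≤ T, ∃ a ∈ segment ℝ (ULvertex T Δt u l j) (ULvertex T Δt u l j'),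
      (∀ i ≤ T, ∑ t ∈ prefixSet T i, p t ≤ ∑ t ∈ prefixSet T i, a t) ∧ ∑ t, p t = ∑ t, a t := by
  set s := Δt * ∑ t, p t
  set g : ℕ → ℝ := fun k => ZExt u k + ZExt l (T - k)
  have h0 : g 0 ≤ s := by simpa [g, ZExt_zero] using (mem_ULset_iff.1 hp univ).1
  have hT : s ≤ g T := by simpa [g, ZExt_zero] using (mem_ULset_iff.1 hp univ).2
  obtain ⟨j, j', hjj', hj'j, hj'T, hjs, hsj'⟩ := exists_adjacent_le_le g h0 T hT
  obtain ⟨α, β, hα, hβ, hαβ, hs⟩ : s ∈ segment ℝ (g j) (g j') := by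
    rw [segment_eq_Icc (hjs.trans hsj')]
    exact ⟨hjs, hsj'⟩
  simp only [smul_eq_mul] at hs
  refine ⟨j, by omega, j', hj'T, _, ⟨α, β, hα, hβ, hαβ, rfl⟩, fun i hi => ?_, ?_⟩
  · refine le_of_mul_le_mul_left ?_ hΔt
    have hpi := mul_sum_le_of_mem_ULset hp (prefixSet T i)
    rw [card_prefixSet hi] at hpi
    rw [mul_sum_smul_add_smul, sum_prefixSet_ULvertex hΔt.ne' j hi,
      sum_prefixSet_ULvertex hΔt.ne' j' hi]
    by_cases hij : i ≤ j
    · rw [min_eq_left hij, min_eq_left (hij.trans hjj')]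
      linear_combination hpi.trans (min_le_left _ _) - ZExt u i * hαβ
    · rw [min_eq_right (by omega), min_eq_right (by omega)]
      linear_combination hpi.trans (min_le_right _ _) + ZExt l (T - i) * hαβ - hs
  · refine mul_left_cancel₀ hΔt.ne' ?_
    rw [mul_sum_smul_add_smul, sum_ULvertex hΔt.ne' (by omega), sum_ULvertex hΔt.ne' hj'T]
    exact hs.symm

def ULvertexPerms (T : ℕ) (Δt : ℝ) (u l : ℕ → ℝ) : Set (Fin T → ℝ) :=
  {q | ∃ σ : Equiv.Perm (Fin T), ∃ k ≤ T, q = ULvertex T Δt u l k ∘ σ}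

lemma comp_mem_ULvertexPerms (hk : k ≤ T) (σ : Equiv.Perm (Fin T)) :
    ULvertex T Δt u l k ∘ σ ∈ ULvertexPerms T Δt u l :=
  ⟨σ, k, hk, rfl⟩

lemma finite_ULvertexPerms : (ULvertexPerms T Δt u l).Finite := by
  refine (Set.finite_range fun x : Equiv.Perm (Fin T) × Fin (T + 1) =>
    ULvertex T Δt u l x.2 ∘ x.1).subset ?_
  rintro _ ⟨σ, k, hk, rfl⟩
  exact ⟨(σ, ⟨k, by omega⟩), rfl⟩

lemma convexHull_ULvertexPerms_subset (hv : ValidUL T u l) (hΔt : 0 < Δt) :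
    convexHull ℝ (ULvertexPerms T Δt u l) ⊆ ULset T Δt u l := by
  refine convexHull_min ?_ convex_ULset
  rintro _ ⟨σ, k, hk, rfl⟩
  exact comp_perm_mem_ULset (ULvertex_mem_ULset hv hΔt hk) σ

lemma exists_mem_convexHull_ULvertexPerms_sum_mul_le (hΔt : 0 < Δt) {p : Fin T → ℝ}
    (hp : p ∈ ULset T Δt u l) (c : Fin T → ℝ) :
    ∃ a ∈ convexHull ℝ (ULvertexPerms T Δt u l), ∑ t, c t * p t ≤ ∑ t, c t * a t := by
  set σ : Equiv.Perm (Fin T) := Fin.revPerm.trans (Tuple.sort c)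
  have hσ : Antitone (c ∘ σ) := fun a b hab => Tuple.monotone_sort c (Fin.rev_le_rev.2 hab)
  obtain ⟨j, hj, j', hj', a, ha, hpref, htot⟩ :=
    exists_mem_segment_ULvertex_sum_prefixSet_le hΔt (comp_perm_mem_ULset hp σ)
  have ha' : a ∘ σ.symm ∈
      segment ℝ (ULvertex T Δt u l j ∘ σ.symm) (ULvertex T Δt u l j' ∘ σ.symm) := by
    obtain ⟨α, β, hα, hβ, hαβ, rfl⟩ := ha
    exact ⟨α, β, hα, hβ, hαβ, rfl⟩
  refine ⟨a ∘ σ.symm, segment_subset_convexHull (comp_mem_ULvertexPerms hj σ.symm)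
    (comp_mem_ULvertexPerms hj' σ.symm) ha', ?_⟩
  calc ∑ t, c t * p t = ∑ t, (c ∘ σ) t * (p ∘ σ) t := (Equiv.sum_comp σ _).symm
    _ ≤ ∑ t, (c ∘ σ) t * a t := hσ.sum_mul_le_sum_mul hpref htot
    _ = ∑ t, c t * (a ∘ σ.symm) t := by simpa using Equiv.sum_comp σ fun t => c t * a (σ.symm t)

lemma ULset_subset_convexHull_ULvertexPerms (hΔt : 0 < Δt) :
    ULset T Δt u l ⊆ convexHull ℝ (ULvertexPerms T Δt u l) := by
  intro p hp
  by_contra hnot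
  obtain ⟨f, r, hf, hfp⟩ := geometric_hahn_banach_closed_point (convex_convexHull ℝ _)
    (finite_ULvertexPerms.isClosed_convexHull (𝕜 := ℝ)) hnot
  set c : Fin T → ℝ := fun t => f fun j => if t = j then 1 else 0
  have hrepr (x : Fin T → ℝ) : f x = ∑ t, c t * x t := by
    simp_rw [mul_comm (c _)]
    exact f.toLinearMap.pi_apply_eq_sum_univ x
  obtain ⟨a, ha, hle⟩ := exists_mem_convexHull_ULvertexPerms_sum_mul_le hΔt hp c
  linarith [hf a ha, hrepr p, hrepr a]

theorem ULset_eq_convexHull_vertices_general (T : ℕ) (Δt : ℝ) (hΔt : 0 < Δt)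
    (u l : ℕ → ℝ) (hvalid : ValidUL T u l) :
    ULset T Δt u l =
      convexHull ℝ {q : Fin T → ℝ |
        ∃ σ : Equiv.Perm (Fin T), ∃ k ≤ T, q = ULvertex T Δt u l k ∘ σ} :=
  (ULset_subset_convexHull_ULvertexPerms hΔt).antisymm
    (convexHull_ULvertexPerms_subset hvalid hΔt)

/-- `F(u,l)` equals the convex hull of the permutations of the
`T+1` vertex vectors `p^(0), …, p^(T)`. -/
theorem ULset_eq_convexHull_vertices (T : ℕ) (hT : 1 ≤ T) (Δt : ℝ) (hΔt : 0 < Δt)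
    (u l : ℕ → ℝ) (hvalid : ValidUL T u l) :
    ULset T Δt u l =
      convexHull ℝ {q : Fin T → ℝ |
        ∃ σ : Equiv.Perm (Fin T), ∃ k ≤ T, q = ULvertex T Δt u l k ∘ σ} :=
  ULset_eq_convexHull_vertices_general T Δt hΔt u l hvalid

end
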